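/- Let 1 ≤ k ≤ n-1 with k even. With W_s(i_1, …, i_k) the s-th largest of the n-k values P(A_{i_1} ∩ ⋯ ∩ A_{i_k} ∩ A_j), j ∉ {i_1, …, i_k}, one has P(X ≥ 1) ≥ Σ_{j=1}^{k} (-1)^{j+1} S_j + Σ_{1 ≤ r_1 < ⋯ < r_k ≤ n} Σ_{s=1}^{n-k} W_s(r_1, …, r_k) · k/((k+s)(k+s-1)). If instead k is odd, then P(X ≥ 1) ≤ Σ_{j=1}^{k} (-1)^{j+1} S_j − Σ_{1 ≤ r_1 < ⋯ < r_k ≤ n} Σ_{s=1}^{n-k} W_s(r_1, …, r_k) · k/((k+s)(k+s-1)). -/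

import Mathlib

open MeasureTheory Finset
open scoped Classical

/-- The `s`-th largest element of a multiset of reals (`s = 1` giving the
largest), defined as the element at position `card - s` of the ascending sort,
with default value `0`. -/
noncomputable def nthLargest (m : Multiset ℝ) (s : ℕ) : ℝ :=
  (m.sort (· ≤ ·)).getD (Multiset.card m - s) 0

/-- Abel summation comparison. -/
lemma abel_sum (m : ℕ) (c a w : ℕ → ℝ)
    (hc : ∀ s, 1 ≤ s → s ≤ m → 0 ≤ c s)
    (hmono : ∀ s t, 1 ≤ s → s ≤ t → t ≤ m → c t ≤ c s)
    (hpar : ∀ t, 1 ≤ t → t ≤ m → ∑ s ∈ Icc 1 t, w s ≤ ∑ s ∈ Icc 1 t, a s) :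
    ∑ s ∈ Icc 1 m, c s * w s ≤ ∑ s ∈ Icc 1 m, c s * a s := by
  induction m generalizing c with
  | zero => simp
  | succ m ih =>
    have key : ∀ f : ℕ → ℝ, ∑ s ∈ Icc 1 (m+1), c s * f s
        = (∑ s ∈ Icc 1 m, (c s - c (m+1)) * f s) + c (m+1) * ∑ s ∈ Icc 1 (m+1), f s := by
      intro f
      have e1 : ∑ s ∈ Icc 1 m, c s * f s
          = ∑ s ∈ Icc 1 m, ((c s - c (m+1)) * f s + c (m+1) * f s) :=
        Finset.sum_congr rfl (fun s _ => by ring)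
      rw [Finset.sum_Icc_succ_top (by omega), Finset.sum_Icc_succ_top (by omega) f,
        e1, Finset.sum_add_distrib, mul_add, Finset.mul_sum]
      ring
    rw [key w, key a]
    have h1 : ∑ s ∈ Icc 1 m, (c s - c (m+1)) * w s ≤ ∑ s ∈ Icc 1 m, (c s - c (m+1)) * a s := by
      apply ih
      · intro s hs1 hsm
        have := hmono s (m+1) hs1 (by omega) (by omega)
        linarith
      · intro s t hs1 hst htm
        have := hmono s t hs1 hst (by omega); linarith
      · intro t ht1 htm; exact hpar t ht1 (by omega)
    have h2 : c (m+1) * ∑ s ∈ Icc 1 (m+1), w s ≤ c (m+1) * ∑ s ∈ Icc 1 (m+1), a s :=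
      mul_le_mul_of_nonneg_left (hpar (m+1) (by omega) le_rfl) (hc (m+1) (by omega) le_rfl)
    linarith

/-- lift a sub-multiset of a mapped multiset -/
lemma exists_of_le_map {α β : Type*} [DecidableEq α] [DecidableEq β] {f : α → β}
    {u : Multiset β} {m : Multiset α} (h : u ≤ m.map f) : ∃ m' ≤ m, u = m'.map f := by
  induction u using Multiset.induction_on generalizing m with
  | empty => exact ⟨0, Multiset.zero_le m, rfl⟩
  | cons b u ih =>
    have hb : b ∈ m.map f := Multiset.mem_of_le h (Multiset.mem_cons_self b u)
    obtain ⟨j, hj, rfl⟩ := Multiset.mem_map.1 hb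
    have hu : u ≤ (m.erase j).map f := by
      rw [Multiset.map_erase_of_mem f m hj]
      simpa using Multiset.erase_le_erase (f j) h
    obtain ⟨m'', hm'', rfl⟩ := ih hu
    refine ⟨j ::ₘ m'', ?_, by simp⟩
    calc j ::ₘ m'' ≤ j ::ₘ m.erase j := Multiset.cons_le_cons j hm''
    _ = m := Multiset.cons_erase hj

lemma drop_sum (l : List ℝ) (t : ℕ) (ht : t ≤ l.length) :
    (l.drop (l.length - t)).sum = ∑ s ∈ Icc 1 t, l.getD (l.length - s) 0 := by
  induction t with
  | zero => simp
  | succ t ih =>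
    have h1 : l.length - (t+1) < l.length := by omega
    rw [List.drop_eq_getElem_cons h1]
    have h2 : l.length - (t+1) + 1 = l.length - t := by omega
    rw [h2, List.sum_cons, ih (by omega), Finset.sum_Icc_succ_top (by omega)]
    rw [List.getD_eq_getElem l 0 h1]
    ring

/-- the sum of the `t` largest elements is realized by a sub-multiset -/
lemma exists_submultiset_topsum (M : Multiset ℝ) (t : ℕ) (ht : t ≤ Multiset.card M) :
    ∃ u : Multiset ℝ, u ≤ M ∧ Multiset.card u = t ∧
      u.sum = ∑ s ∈ Icc 1 t, nthLargest M s := by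
  set l := M.sort (· ≤ ·) with hl
  have hlen : l.length = Multiset.card M := Multiset.length_sort _
  refine ⟨(l.drop (l.length - t) : List ℝ), ?_, ?_, ?_⟩
  · calc ((l.drop (l.length - t) : List ℝ) : Multiset ℝ) ≤ (l : Multiset ℝ) :=
        Multiset.coe_le.2 (List.drop_sublist _ _).subperm
    _ = M := Multiset.sort_eq _ _
  · simp [List.length_drop]; omega
  · rw [Multiset.sum_coe, drop_sum l t (by omega)]
    apply Finset.sum_congr rfl
    intro s _
    simp only [nthLargest, ← hl, hlen]

lemma bonf_ident (k : ℕ) (hk : 1 ≤ k) (x : ℕ) :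
    (if 1 ≤ x then (1:ℝ) else 0) - ∑ j ∈ Icc 1 k, (-1:ℝ)^(j+1) * (x.choose j : ℝ)
      = (-1:ℝ)^k * ((x-1).choose k : ℝ) := by
  induction k with
  | zero => omega
  | succ k ih =>
    rcases Nat.eq_or_lt_of_le hk with h1 | h1
    · -- k + 1 = 1
      have : k = 0 := by omega
      subst this
      simp only [Icc_self, Finset.sum_singleton]
      rcases Nat.eq_zero_or_pos x with hx | hx
      · subst hx; norm_num
      · have hx' : 1 ≤ x := hx
        rw [if_pos hx']
        have : ((x-1 : ℕ) : ℝ) = (x:ℝ) - 1 := by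
          rw [Nat.cast_sub hx]; norm_num
        simp [this]
    · have hk' : 1 ≤ k := by omega
      rw [Finset.sum_Icc_succ_top (by omega)]
      have := ih hk'
      have key : ((x-1).choose k : ℝ) - (x.choose (k+1) : ℝ) = - ((x-1).choose (k+1) : ℝ) := by
        rcases Nat.eq_zero_or_pos x with hx | hx
        · subst hx
          simp [Nat.choose_eq_zero_of_lt hk', Nat.choose_eq_zero_of_lt (by omega : 0 < k+1)]
        · obtain ⟨x', rfl⟩ : ∃ x', x = x' + 1 := ⟨x - 1, by omega⟩
          have : (x' + 1).choose (k+1) = x'.choose k + x'.choose (k+1) := Nat.choose_succ_succ x' k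
          simp only [Nat.add_sub_cancel, this]
          push_cast; ring
      calc (if 1 ≤ x then (1:ℝ) else 0)
            - (∑ j ∈ Icc 1 k, (-1:ℝ)^(j+1) * (x.choose j : ℝ) + (-1:ℝ)^(k+2) * (x.choose (k+1) : ℝ))
          = (-1:ℝ)^k * ((x-1).choose k : ℝ) - (-1:ℝ)^(k+2) * (x.choose (k+1) : ℝ) := by
            rw [← this]; ring
        _ = (-1:ℝ)^(k+1) * ((x-1).choose (k+1) : ℝ) := by
            have e : (-1:ℝ)^(k+2) = (-1:ℝ)^k := by ring
            rw [e, ← mul_sub, key]; ring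

lemma choose_real (k x : ℕ) (hk : 1 ≤ k) :
    (x.choose k : ℝ) * ((x - k : ℕ) : ℝ) / (x : ℝ) = ((x-1).choose k : ℝ) := by
  rcases Nat.eq_zero_or_pos x with hx | hx
  · subst hx
    simp [Nat.choose_eq_zero_of_lt hk]
  · have hnat : (x - k) * x.choose k = x * (x-1).choose k := by
      have e1 : x.choose k * (x - k) = x.choose (k+1) * (k+1) := (Nat.choose_succ_right_eq x k).symm
      have e2 : x * (x-1).choose k = x.choose (k+1) * (k+1) := by
        have := Nat.add_one_mul_choose_eq (x-1) k
        rwa [Nat.sub_add_cancel hx] at this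
      rw [mul_comm, e1, ← e2]
    have hx0 : (x : ℝ) ≠ 0 := Nat.cast_ne_zero.2 (by omega)
    field_simp
    have := congrArg (fun n : ℕ => (n : ℝ)) hnat
    push_cast at this
    linarith [this]

lemma csum (k : ℕ) (hk : 1 ≤ k) (y : ℕ) :
    ∑ s ∈ Icc 1 y, (k:ℝ)/(((k:ℝ)+s)*((k:ℝ)+s-1)) = (y:ℝ)/((k:ℝ)+y) := by
  induction y with
  | zero => simp
  | succ y ih =>
    rw [Finset.sum_Icc_succ_top (by omega), ih]
    have hk1 : (1:ℝ) ≤ (k:ℝ) := by exact_mod_cast hk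
    have h1 : (k:ℝ) + y > 0 := by positivity
    have h2 : (k:ℝ) + (y+1:ℕ) - 1 = (k:ℝ) + y := by push_cast; ring
    have h3 : (k:ℝ) + ((y:ℕ)+1:ℕ) > 0 := by positivity
    rw [h2]
    push_cast
    have h4 : (k:ℝ) + ((y:ℝ)+1) > 0 := by linarith
    field_simp
    ring

lemma topsum_eq {n : ℕ} (R : Finset (Fin n)) (v : Fin n → ℝ) (t : ℕ) (ht : t ≤ Rᶜ.card) :
    ∃ J : Finset (Fin n), J ⊆ Rᶜ ∧ J.card = t ∧
      ∑ s ∈ Icc 1 t, nthLargest (Rᶜ.val.map v) s = ∑ j ∈ J, v j := by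
  have hcard : Multiset.card (Rᶜ.val.map v) = Rᶜ.card := by
    rw [Multiset.card_map]; rfl
  obtain ⟨u, hu, hucard, husum⟩ := exists_submultiset_topsum (Rᶜ.val.map v) t (by omega)
  obtain ⟨m', hm', rfl⟩ := exists_of_le_map hu
  have hnodup : m'.Nodup := Multiset.nodup_of_le hm' Rᶜ.nodup
  refine ⟨⟨m', hnodup⟩, ?_, ?_, ?_⟩
  · intro j hj
    exact Multiset.mem_of_le hm' hj
  · simpa using hucard.symm ▸ (Multiset.card_map v m').symm
  · rw [← husum]
    rfl

lemma core (n k : ℕ) (hk : 1 ≤ k) (hkn : k + 1 ≤ n) (p : Finset (Fin n) → ℝ)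
    (hp : ∀ S, 0 ≤ p S) :
    ∑ R ∈ powersetCard k (univ : Finset (Fin n)),
      ∑ s ∈ Icc 1 (n - k),
        nthLargest ((Rᶜ : Finset (Fin n)).val.map
            (fun j => ∑ S ∈ univ.filter (fun S => insert j R ⊆ S), p S)) s
          * ((k:ℝ) / (((k:ℝ) + s) * ((k:ℝ) + s - 1)))
    ≤ ∑ S ∈ (univ : Finset (Finset (Fin n))), p S * (((S.card - 1).choose k : ℕ) : ℝ) := by
  set c : ℕ → ℝ := fun s => (k:ℝ) / (((k:ℝ) + s) * ((k:ℝ) + s - 1)) with hc_def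
  have hk1 : (1:ℝ) ≤ (k:ℝ) := by exact_mod_cast hk
  -- basic facts about c
  have hcpos : ∀ s : ℕ, 1 ≤ s → 0 ≤ c s := by
    intro s hs
    have hs1 : (1:ℝ) ≤ (s:ℝ) := by exact_mod_cast hs
    have : (0:ℝ) < ((k:ℝ) + s) * ((k:ℝ) + s - 1) := by nlinarith
    positivity
  have hcmono : ∀ s t : ℕ, 1 ≤ s → s ≤ t → c t ≤ c s := by
    intro s t hs hst
    have hs1 : (1:ℝ) ≤ (s:ℝ) := by exact_mod_cast hs
    have hst1 : (s:ℝ) ≤ (t:ℝ) := by exact_mod_cast hst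
    apply div_le_div_of_nonneg_left (by linarith) (by nlinarith) (by nlinarith)
  -- per-R bound
  have perR : ∀ R ∈ powersetCard k (univ : Finset (Fin n)),
      ∑ s ∈ Icc 1 (n - k),
        nthLargest ((Rᶜ : Finset (Fin n)).val.map
            (fun j => ∑ S ∈ univ.filter (fun S => insert j R ⊆ S), p S)) s * c s
      ≤ ∑ S ∈ univ.filter (fun S => R ⊆ S),
          p S * ((S.card - k : ℕ) : ℝ) / (S.card : ℝ) := by
    intro R hR
    have hRcard : R.card = k := (mem_powersetCard.1 hR).2
    have hRc : Rᶜ.card = n - k := by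
      rw [Finset.card_compl, hRcard]; simp
    set v : Fin n → ℝ := fun j => ∑ S ∈ univ.filter (fun S => insert j R ⊆ S), p S with hv_def
    set a : ℕ → ℝ := fun s =>
      ∑ S ∈ univ.filter (fun S => R ⊆ S ∧ s ≤ (S \ R).card), p S with ha_def
    have hsub : ∀ S : Finset (Fin n), R ⊆ S → (S \ R).card ≤ n - k := by
      intro S hRS
      have : S \ R ⊆ Rᶜ := fun j hj => by
        simp only [Finset.mem_sdiff] at hj
        simp [Finset.mem_compl, hj.2]
      calc (S \ R).card ≤ Rᶜ.card := Finset.card_le_card this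
        _ = n - k := hRc
    -- step 1: abel
    have step1 : ∑ s ∈ Icc 1 (n - k), c s * nthLargest (Rᶜ.val.map v) s
        ≤ ∑ s ∈ Icc 1 (n - k), c s * a s := by
      apply abel_sum
      · intro s hs _; exact hcpos s hs
      · intro s t hs hst _; exact hcmono s t hs hst
      · intro t ht1 htm
        obtain ⟨J, hJsub, hJcard, hJsum⟩ := topsum_eq R v t (by omega)
        rw [hJsum]
        -- ∑ j ∈ J, v j ≤ ∑ s ∈ Icc 1 t, a s
        have lhs_eq : ∑ j ∈ J, v j
            = ∑ S ∈ (univ : Finset (Finset (Fin n))),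
                ∑ j ∈ J, (if insert j R ⊆ S then p S else 0) := by
          rw [Finset.sum_comm]
          apply Finset.sum_congr rfl
          intro j _
          rw [hv_def]
          simp [Finset.sum_filter]
        have rhs_eq : ∑ s ∈ Icc 1 t, a s
            = ∑ S ∈ (univ : Finset (Finset (Fin n))),
                ∑ s ∈ Icc 1 t, (if R ⊆ S ∧ s ≤ (S \ R).card then p S else 0) := by
          rw [Finset.sum_comm]
          apply Finset.sum_congr rfl
          intro s _
          rw [ha_def]
          simp [Finset.sum_filter]
        rw [lhs_eq, rhs_eq]
        apply Finset.sum_le_sum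
        intro S _
        rw [← Finset.sum_filter, ← Finset.sum_filter,
          Finset.sum_const, Finset.sum_const, nsmul_eq_mul, nsmul_eq_mul]
        apply mul_le_mul_of_nonneg_right _ (hp S)
        rw [Nat.cast_le]
        by_cases hRS : R ⊆ S
        · have h1 : (J.filter (fun j => insert j R ⊆ S)).card ≤ min t ((S \ R).card) := by
            apply le_min
            · calc (J.filter (fun j => insert j R ⊆ S)).card ≤ J.card :=
                  Finset.card_filter_le _ _
                _ = t := hJcard
            · apply Finset.card_le_card
              intro j hj
              simp only [Finset.mem_filter] at hj
              have hjS : j ∈ S := hj.2 (Finset.mem_insert_self j R)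
              have hjR : j ∉ R := by
                have := hJsub hj.1
                simpa [Finset.mem_compl] using this
              simp [Finset.mem_sdiff, hjS, hjR]
          have h2 : ((Icc 1 t).filter (fun s => R ⊆ S ∧ s ≤ (S \ R).card)).card
              = min t ((S \ R).card) := by
            have : (Icc 1 t).filter (fun s => R ⊆ S ∧ s ≤ (S \ R).card)
                = Icc 1 (min t ((S \ R).card)) := by
              ext s
              simp only [Finset.mem_filter, Finset.mem_Icc, hRS, true_and]
              omega
            rw [this, Nat.card_Icc]
            omega
          omega
        · have : (J.filter (fun j => insert j R ⊆ S)) = ∅ := by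
            apply Finset.filter_eq_empty_iff.2
            intro j _
            intro hins
            exact hRS (fun x hx => hins (Finset.mem_insert_of_mem hx))
          simp [this]
    -- step 2: identify ∑ c * a with per-S formula
    have step2 : ∑ s ∈ Icc 1 (n - k), c s * a s
        = ∑ S ∈ univ.filter (fun S => R ⊆ S),
            p S * ((S.card - k : ℕ) : ℝ) / (S.card : ℝ) := by
      have e1 : ∑ s ∈ Icc 1 (n - k), c s * a s
          = ∑ S ∈ (univ : Finset (Finset (Fin n))),
              ∑ s ∈ Icc 1 (n - k), (if R ⊆ S ∧ s ≤ (S \ R).card then c s * p S else 0) := by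
        rw [Finset.sum_comm]
        apply Finset.sum_congr rfl
        intro s _
        rw [ha_def]
        simp only
        rw [Finset.mul_sum, Finset.sum_filter]
      rw [e1, Finset.sum_filter]
      apply Finset.sum_congr rfl
      intro S _
      by_cases hRS : R ⊆ S
      · have hy : (S \ R).card = S.card - k := by
          rw [Finset.card_sdiff_of_subset hRS, hRcard]
        have hyle : (S \ R).card ≤ n - k := hsub S hRS
        have hfil : (Icc 1 (n-k)).filter (fun s => R ⊆ S ∧ s ≤ (S \ R).card)
            = Icc 1 ((S \ R).card) := by
          ext s
          simp only [Finset.mem_filter, Finset.mem_Icc, hRS, true_and]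
          omega
        rw [if_pos hRS, ← Finset.sum_filter, hfil]
        have : ∑ s ∈ Icc 1 ((S\R).card), c s * p S = (∑ s ∈ Icc 1 ((S\R).card), c s) * p S := by
          rw [Finset.sum_mul]
        rw [this, hc_def, csum k hk]
        have hkS : k ≤ S.card := by
          calc k = R.card := hRcard.symm
            _ ≤ S.card := Finset.card_le_card hRS
        have hScast : (k:ℝ) + ((S \ R).card : ℝ) = (S.card : ℝ) := by
          rw [hy]
          have : ((S.card - k : ℕ) : ℝ) = (S.card : ℝ) - (k : ℝ) := by
            rw [Nat.cast_sub hkS]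
          rw [this]; ring
        rw [hScast, hy]
        ring
      · rw [if_neg hRS]
        apply Finset.sum_eq_zero
        intro s _
        rw [if_neg (by tauto)]
    calc ∑ s ∈ Icc 1 (n - k), nthLargest (Rᶜ.val.map v) s * c s
        = ∑ s ∈ Icc 1 (n - k), c s * nthLargest (Rᶜ.val.map v) s := by
          apply Finset.sum_congr rfl; intro s _; ring
      _ ≤ ∑ s ∈ Icc 1 (n - k), c s * a s := step1
      _ = _ := step2
  -- assemble
  calc ∑ R ∈ powersetCard k (univ : Finset (Fin n)), ∑ s ∈ Icc 1 (n - k),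
        nthLargest (Rᶜ.val.map (fun j => ∑ S ∈ univ.filter (fun S => insert j R ⊆ S), p S)) s * c s
      ≤ ∑ R ∈ powersetCard k (univ : Finset (Fin n)),
          ∑ S ∈ univ.filter (fun S => R ⊆ S),
            p S * ((S.card - k : ℕ) : ℝ) / (S.card : ℝ) :=
        Finset.sum_le_sum perR
    _ = ∑ S ∈ (univ : Finset (Finset (Fin n))),
          ∑ R ∈ powersetCard k (univ : Finset (Fin n)),
            (if R ⊆ S then p S * ((S.card - k : ℕ) : ℝ) / (S.card : ℝ) else 0) := by
        rw [Finset.sum_comm]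
        apply Finset.sum_congr rfl
        intro R _
        rw [Finset.sum_filter]
    _ = ∑ S ∈ (univ : Finset (Finset (Fin n))), p S * (((S.card - 1).choose k : ℕ) : ℝ) := by
        apply Finset.sum_congr rfl
        intro S _
        rw [← Finset.sum_filter]
        have hfil : (powersetCard k (univ : Finset (Fin n))).filter (fun R => R ⊆ S)
            = powersetCard k S := by
          ext R
          simp only [Finset.mem_filter, Finset.mem_powersetCard]
          constructor
          · rintro ⟨⟨-, h2⟩, h3⟩; exact ⟨h3, h2⟩
          · rintro ⟨h1, h2⟩; exact ⟨⟨Finset.subset_univ R, h2⟩, h1⟩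
        rw [hfil, Finset.sum_const, Finset.card_powersetCard, nsmul_eq_mul]
        rw [← choose_real k S.card hk]
        ring

lemma ident (n k : ℕ) (hk : 1 ≤ k) (p : Finset (Fin n) → ℝ) :
    ∑ j ∈ Icc 1 k, (-1:ℝ)^(j+1) *
        ∑ T ∈ powersetCard j (univ : Finset (Fin n)),
          ∑ S ∈ univ.filter (fun S => T ⊆ S), p S
    = (∑ S ∈ univ.filter (fun S : Finset (Fin n) => 1 ≤ S.card), p S)
      - (-1:ℝ)^k * ∑ S ∈ (univ : Finset (Finset (Fin n))),
          p S * (((S.card - 1).choose k : ℕ) : ℝ) := by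
  have inner : ∀ j : ℕ, ∑ T ∈ powersetCard j (univ : Finset (Fin n)),
      ∑ S ∈ univ.filter (fun S => T ⊆ S), p S
      = ∑ S ∈ (univ : Finset (Finset (Fin n))), (S.card.choose j : ℝ) * p S := by
    intro j
    have e1 : ∑ T ∈ powersetCard j (univ : Finset (Fin n)),
        ∑ S ∈ univ.filter (fun S => T ⊆ S), p S
        = ∑ S ∈ (univ : Finset (Finset (Fin n))),
            ∑ T ∈ powersetCard j (univ : Finset (Fin n)), (if T ⊆ S then p S else 0) := by
      rw [Finset.sum_comm]
      apply Finset.sum_congr rfl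
      intro T _
      rw [Finset.sum_filter]
    rw [e1]
    apply Finset.sum_congr rfl
    intro S _
    rw [← Finset.sum_filter]
    have hfil : (powersetCard j (univ : Finset (Fin n))).filter (fun T => T ⊆ S)
        = powersetCard j S := by
      ext T
      simp only [Finset.mem_filter, Finset.mem_powersetCard]
      constructor
      · rintro ⟨⟨-, h2⟩, h3⟩; exact ⟨h3, h2⟩
      · rintro ⟨h1, h2⟩; exact ⟨⟨Finset.subset_univ T, h2⟩, h1⟩
    rw [hfil, Finset.sum_const, Finset.card_powersetCard, nsmul_eq_mul]
  calc ∑ j ∈ Icc 1 k, (-1:ℝ)^(j+1) *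
        ∑ T ∈ powersetCard j (univ : Finset (Fin n)), ∑ S ∈ univ.filter (fun S => T ⊆ S), p S
      = ∑ j ∈ Icc 1 k, ∑ S ∈ (univ : Finset (Finset (Fin n))),
          (-1:ℝ)^(j+1) * ((S.card.choose j : ℝ) * p S) := by
        apply Finset.sum_congr rfl
        intro j _
        rw [inner j, Finset.mul_sum]
    _ = ∑ S ∈ (univ : Finset (Finset (Fin n))),
          ∑ j ∈ Icc 1 k, (-1:ℝ)^(j+1) * ((S.card.choose j : ℝ) * p S) := Finset.sum_comm
    _ = ∑ S ∈ (univ : Finset (Finset (Fin n))),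
          ((if 1 ≤ S.card then (1:ℝ) else 0) - (-1:ℝ)^k * (((S.card - 1).choose k : ℕ) : ℝ)) * p S := by
        apply Finset.sum_congr rfl
        intro S _
        have := bonf_ident k hk S.card
        have e : ∑ j ∈ Icc 1 k, (-1:ℝ)^(j+1) * ((S.card.choose j : ℝ) * p S)
            = (∑ j ∈ Icc 1 k, (-1:ℝ)^(j+1) * (S.card.choose j : ℝ)) * p S := by
          rw [Finset.sum_mul]
          apply Finset.sum_congr rfl
          intro j _; ring
        rw [e]
        congr 1
        linarith
    _ = (∑ S ∈ univ.filter (fun S : Finset (Fin n) => 1 ≤ S.card), p S)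
        - (-1:ℝ)^k * ∑ S ∈ (univ : Finset (Finset (Fin n))),
            p S * (((S.card - 1).choose k : ℕ) : ℝ) := by
        rw [Finset.sum_filter, Finset.mul_sum, ← Finset.sum_sub_distrib]
        apply Finset.sum_congr rfl
        intro S _
        by_cases h : 1 ≤ S.card <;> simp [h] <;> ring

-- measure decomposition
lemma meas_pat {Ω : Type*} [MeasurableSpace Ω] (P : Measure Ω) [IsProbabilityMeasure P]
    (n : ℕ) (A : Fin n → Set Ω) (hA : ∀ l, MeasurableSet (A l))
    (Q : Finset (Fin n) → Prop) [DecidablePred Q] :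
    (P {ω | Q (Finset.univ.filter (fun l => ω ∈ A l))}).toReal
      = ∑ S ∈ univ.filter Q,
          (P {ω | Finset.univ.filter (fun l => ω ∈ A l) = S}).toReal := by
  have hmeas : ∀ S : Finset (Fin n),
      MeasurableSet {ω | Finset.univ.filter (fun l => ω ∈ A l) = S} := by
    intro S
    have : {ω | Finset.univ.filter (fun l => ω ∈ A l) = S}
        = (⋂ l ∈ S, A l) ∩ (⋂ l ∈ (Sᶜ : Finset (Fin n)), (A l)ᶜ) := by
      ext ω
      simp only [Set.mem_setOf_eq, Set.mem_inter_iff, Set.mem_iInter, Finset.mem_compl,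
        Set.mem_compl_iff, Finset.ext_iff, Finset.mem_filter, Finset.mem_univ, true_and]
      constructor
      · intro h
        exact ⟨fun l hl => (h l).2 hl, fun l hl hA => hl ((h l).1 hA)⟩
      · intro ⟨h1, h2⟩ l
        constructor
        · intro hω
          by_contra hl
          exact h2 l hl hω
        · intro hl; exact h1 l hl
    rw [this]
    exact ((Finset.measurableSet_biInter _ (fun l _ => hA l)).inter
      (Finset.measurableSet_biInter _ (fun l _ => (hA l).compl)))
  have hset : {ω | Q (Finset.univ.filter (fun l => ω ∈ A l))}
      = ⋃ S ∈ univ.filter Q, {ω | Finset.univ.filter (fun l => ω ∈ A l) = S} := by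
    ext ω
    simp only [Set.mem_setOf_eq, Set.mem_iUnion, Finset.mem_filter, Finset.mem_univ, true_and]
    constructor
    · intro h
      exact ⟨_, h, rfl⟩
    · rintro ⟨S, hS, hEq⟩
      rwa [hEq]
  rw [hset, measure_biUnion_finset, ENNReal.toReal_sum]
  · intro S _; exact measure_ne_top P _
  · intro S _ S' _ hSS'
    apply Set.disjoint_left.2
    intro ω h1 h2
    exact hSS' (h1.symm.trans h2)
  · intro S _; exact hmeas S

/-- for `1 ≤ k ≤ n-1`, with `W_s(r_1,…,r_k)` the `s`-th largest of
the `n-k` values `P(A_{r_1} ∩ ⋯ ∩ A_{r_k} ∩ A_j)`, `j ∉ {r_1,…,r_k}`: if `k` is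
even then
`P(X ≥ 1) ≥ ∑_{j=1}^{k} (-1)^{j+1} S_j + ∑_{r_1<⋯<r_k} ∑_{s=1}^{n-k} W_s(r_1,…,r_k) · k/((k+s)(k+s-1))`,
and if `k` is odd then
`P(X ≥ 1) ≤ ∑_{j=1}^{k} (-1)^{j+1} S_j − ∑_{r_1<⋯<r_k} ∑_{s=1}^{n-k} W_s(r_1,…,r_k) · k/((k+s)(k+s-1))`. -/
theorem union_probability_permutation_bounds
    {Ω : Type*} [MeasurableSpace Ω] (P : Measure Ω) [IsProbabilityMeasure P]
    (n k : ℕ) (hk : 1 ≤ k) (hkn : k + 1 ≤ n)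
    (A : Fin n → Set Ω) (hA : ∀ l, MeasurableSet (A l)) :
    (Even k →
      (P {ω | 1 ≤ (Finset.univ.filter (fun l => ω ∈ A l)).card}).toReal
        ≥ (∑ j ∈ Finset.Icc 1 k,
            (-1 : ℝ) ^ (j + 1) *
              ∑ T ∈ Finset.powersetCard j (Finset.univ : Finset (Fin n)),
                (P (⋂ l ∈ T, A l)).toReal)
          + ∑ R ∈ Finset.powersetCard k (Finset.univ : Finset (Fin n)),
              ∑ s ∈ Finset.Icc 1 (n - k),
                nthLargest ((Rᶜ : Finset (Fin n)).val.map
                    (fun j => (P ((⋂ l ∈ R, A l) ∩ A j)).toReal)) s *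
                  ((k : ℝ) / (((k : ℝ) + s) * ((k : ℝ) + s - 1))))
    ∧ (Odd k →
      (P {ω | 1 ≤ (Finset.univ.filter (fun l => ω ∈ A l)).card}).toReal
        ≤ (∑ j ∈ Finset.Icc 1 k,
            (-1 : ℝ) ^ (j + 1) *
              ∑ T ∈ Finset.powersetCard j (Finset.univ : Finset (Fin n)),
                (P (⋂ l ∈ T, A l)).toReal)
          - ∑ R ∈ Finset.powersetCard k (Finset.univ : Finset (Fin n)),
              ∑ s ∈ Finset.Icc 1 (n - k),
                nthLargest ((Rᶜ : Finset (Fin n)).val.map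
                    (fun j => (P ((⋂ l ∈ R, A l) ∩ A j)).toReal)) s *
                  ((k : ℝ) / (((k : ℝ) + s) * ((k : ℝ) + s - 1)))) := by
  set p : Finset (Fin n) → ℝ :=
    fun S => (P {ω | Finset.univ.filter (fun l => ω ∈ A l) = S}).toReal with hp_def
  have hp : ∀ S, 0 ≤ p S := fun S => ENNReal.toReal_nonneg
  -- rewrite the union probability
  have h1 : (P {ω | 1 ≤ (Finset.univ.filter (fun l => ω ∈ A l)).card}).toReal
      = ∑ S ∈ univ.filter (fun S : Finset (Fin n) => 1 ≤ S.card), p S :=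
    meas_pat P n A hA (fun S => 1 ≤ S.card)
  -- rewrite the intersection probabilities
  have h2 : ∀ T : Finset (Fin n), (P (⋂ l ∈ T, A l)).toReal
      = ∑ S ∈ univ.filter (fun S => T ⊆ S), p S := by
    intro T
    have hset : (⋂ l ∈ T, A l) = {ω | T ⊆ Finset.univ.filter (fun l => ω ∈ A l)} := by
      ext ω
      simp [Set.mem_iInter, Finset.subset_iff]
    rw [hset]
    exact meas_pat P n A hA (fun S => T ⊆ S)
  have h3 : ∀ (R : Finset (Fin n)) (j : Fin n), (P ((⋂ l ∈ R, A l) ∩ A j)).toReal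
      = ∑ S ∈ univ.filter (fun S => insert j R ⊆ S), p S := by
    intro R j
    have hset : ((⋂ l ∈ R, A l) ∩ A j)
        = {ω | insert j R ⊆ Finset.univ.filter (fun l => ω ∈ A l)} := by
      ext ω
      simp only [Set.mem_inter_iff, Set.mem_iInter, Set.mem_setOf_eq,
        Finset.insert_subset_iff, Finset.subset_iff, Finset.mem_filter, Finset.mem_univ,
        true_and]
      constructor
      · rintro ⟨hR, hj⟩ x hx
        rcases Finset.mem_insert.1 hx with rfl | hx'
        · exact hj
        · exact hR x hx'
      · intro h
        exact ⟨fun x hx => h (Finset.mem_insert_of_mem hx),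
          h (Finset.mem_insert_self j R)⟩
    rw [hset]
    exact meas_pat P n A hA (fun S => insert j R ⊆ S)
  have hmap : ∀ R : Finset (Fin n),
      (fun j => (P ((⋂ l ∈ R, A l) ∩ A j)).toReal)
        = (fun j => ∑ S ∈ univ.filter (fun S => insert j R ⊆ S), p S) :=
    fun R => funext (fun j => h3 R j)
  have hB : (∑ j ∈ Finset.Icc 1 k,
        (-1 : ℝ) ^ (j + 1) *
          ∑ T ∈ Finset.powersetCard j (Finset.univ : Finset (Fin n)),
            (P (⋂ l ∈ T, A l)).toReal)
      = (∑ S ∈ univ.filter (fun S : Finset (Fin n) => 1 ≤ S.card), p S)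
        - (-1:ℝ)^k * ∑ S ∈ (univ : Finset (Finset (Fin n))),
            p S * (((S.card - 1).choose k : ℕ) : ℝ) := by
    rw [← ident n k hk p]
    apply Finset.sum_congr rfl
    intro j _
    congr 1
    apply Finset.sum_congr rfl
    intro T _
    exact h2 T
  have hC : (∑ R ∈ Finset.powersetCard k (Finset.univ : Finset (Fin n)),
        ∑ s ∈ Finset.Icc 1 (n - k),
          nthLargest ((Rᶜ : Finset (Fin n)).val.map
              (fun j => (P ((⋂ l ∈ R, A l) ∩ A j)).toReal)) s *
            ((k : ℝ) / (((k : ℝ) + s) * ((k : ℝ) + s - 1))))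
      ≤ ∑ S ∈ (univ : Finset (Finset (Fin n))), p S * (((S.card - 1).choose k : ℕ) : ℝ) := by
    rw [show (∑ R ∈ Finset.powersetCard k (Finset.univ : Finset (Fin n)),
        ∑ s ∈ Finset.Icc 1 (n - k),
          nthLargest ((Rᶜ : Finset (Fin n)).val.map
              (fun j => (P ((⋂ l ∈ R, A l) ∩ A j)).toReal)) s *
            ((k : ℝ) / (((k : ℝ) + s) * ((k : ℝ) + s - 1))))
      = ∑ R ∈ Finset.powersetCard k (Finset.univ : Finset (Fin n)),
        ∑ s ∈ Finset.Icc 1 (n - k),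
          nthLargest ((Rᶜ : Finset (Fin n)).val.map
              (fun j => ∑ S ∈ univ.filter (fun S => insert j R ⊆ S), p S)) s
            * ((k:ℝ) / (((k:ℝ) + s) * ((k:ℝ) + s - 1))) from
      Finset.sum_congr rfl (fun R _ => by rw [hmap R])]
    exact core n k hk hkn p hp
  constructor
  · intro hEven
    have hpow : (-1:ℝ)^k = 1 := hEven.neg_one_pow
    rw [h1, hB, hpow]
    linarith
  · intro hOdd
    have hpow : (-1:ℝ)^k = -1 := hOdd.neg_one_pow
    rw [h1, hB, hpow]
    linarith
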